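/- arXiv:1502.04431 — 3 statements merged into one kernel-verified Lean document; each statement's English description precedes it below -/
import Mathlib

section
/- Suppose v(x) = x^{−α}·l(x) for some α > 2 and a function l slowly varying at infinity. Then for every c > 0, ∫_b^∞ v(t)·exp(−c·b²/t) dt = O(b²·v(b²)) as b → ∞. -/
/-!
Substituting `t = b² r` rewrites the integral as `b² ∫_{1/b}^∞ (b² r)^{-α} l(b² r) e^{-c/r} dr`.
If `l` is a.e. measurable on a tail, a Csiszár–Erdős type measure argument shows that
`l y ≤ 2 l x` and `l x ≤ 2 l y` for all large `x ≤ y ≤ 2x`; iterating over dyadic scales gives the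
Potter bound `l y ≤ 2 max (y/x) (x/y) l x`. Hence the integrand is at most
`2 v(b²) r^{-α} max(r, 1/r) e^{-c/r}`, which is integrable on `(0, ∞)`: near `0` because
`e^{-y} ≤ n!/y^n`, near `∞` because `α > 2`.
-/

open Filter MeasureTheory Real
open Set Topology
open scoped Nat

theorem Real.exp_neg_le_factorial_div_pow {y : ℝ} (hy : 0 < y) (n : ℕ) :
    exp (-y) ≤ n ! / y ^ n := by
  rw [exp_neg, ← inv_div]
  exact inv_anti₀ (by positivity) (pow_div_factorial_le_exp y hy.le n)

theorem Real.rpow_neg_mul_exp_neg_div_le (p : ℝ) {c r : ℝ} (hc : 0 < c) (hr : r ∈ Ioc 0 1) :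
    r ^ (-p) * exp (-c / r) ≤ ⌈p⌉₊ ! / c ^ ⌈p⌉₊ := by
  obtain ⟨hr0, hr1⟩ := hr
  calc r ^ (-p) * exp (-c / r) ≤ r ^ (-(⌈p⌉₊ : ℝ)) * (⌈p⌉₊ ! / (c / r) ^ ⌈p⌉₊) := by
        gcongr ?_ * ?_
        · exact rpow_le_rpow_of_exponent_ge hr0 hr1 (neg_le_neg (Nat.le_ceil p))
        · rw [neg_div]; exact exp_neg_le_factorial_div_pow (by positivity) _
    _ = ⌈p⌉₊ ! / c ^ ⌈p⌉₊ := by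
        rw [rpow_neg hr0.le, rpow_natCast, div_pow]; field_simp

theorem setIntegral_le_of_le_mul_kernel {f : ℝ → ℝ} {α c a M : ℝ} (hα : 2 < α) (hc : 0 < c)
    (ha : 0 ≤ a) (hM : 0 ≤ M) (hf0 : ∀ r ∈ Ioi a, 0 ≤ f r)
    (hf : ∀ r ∈ Ioi a, f r ≤ M * (r ^ (-α) * max r r⁻¹ * exp (-c / r))) :
    ∫ r in Ioi a, f r ≤ M * (⌈α + 1⌉₊ ! / c ^ ⌈α + 1⌉₊ + 1 / (α - 2)) := by
  set K : ℝ := ⌈α + 1⌉₊ ! / c ^ ⌈α + 1⌉₊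
  set g : ℝ → ℝ := fun r =>
    M * ((Ioc 0 1).indicator (fun _ => K) r + (Ioi 1).indicator (fun r : ℝ => r ^ (1 - α)) r)
  have hpow : IntegrableOn (fun r : ℝ => r ^ (1 - α)) (Ioi 1) :=
    integrableOn_Ioi_rpow_of_lt (by linarith) one_pos
  have h1 : Integrable ((Ioc (0 : ℝ) 1).indicator fun _ => K) :=
    (integrableOn_const (by simp)).integrable_indicator measurableSet_Ioc
  have h2 : Integrable ((Ioi 1).indicator fun r : ℝ => r ^ (1 - α)) :=
    hpow.integrable_indicator measurableSet_Ioi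
  have hg_int : IntegrableOn g (Ioi 0) := (h1.add h2).restrict.const_mul M
  have hg0 : ∀ r, 0 ≤ g r := fun r =>
    mul_nonneg hM (add_nonneg (indicator_nonneg (fun _ _ => by positivity) r)
      (indicator_nonneg (fun r hr => rpow_nonneg (zero_le_one.trans hr.le) _) r))
  have hfg : ∀ r ∈ Ioi a, f r ≤ g r := by
    intro r hr
    have hr0 : 0 < r := ha.trans_lt hr
    refine (hf r hr).trans (mul_le_mul_of_nonneg_left ?_ hM)
    rcases le_or_gt r 1 with hr1 | hr1
    · have hmem : r ∈ Ioc 0 1 := ⟨hr0, hr1⟩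
      rw [indicator_of_mem hmem, indicator_of_notMem (show r ∉ Ioi 1 from not_lt.2 hr1), add_zero,
        max_eq_right (hr1.trans ((one_le_inv₀ hr0).2 hr1)), ← rpow_neg_one, ← rpow_add hr0,
        ← neg_add]
      exact rpow_neg_mul_exp_neg_div_le (α + 1) hc hmem
    · rw [indicator_of_notMem (show r ∉ Ioc 0 1 from fun h => h.2.not_gt hr1),
        indicator_of_mem (show r ∈ Ioi 1 from hr1),
        zero_add, max_eq_left (((inv_lt_one₀ hr0).2 hr1).le.trans hr1.le), sub_eq_neg_add,
        rpow_add hr0, rpow_one]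
      calc r ^ (-α) * r * exp (-c / r) ≤ r ^ (-α) * r * 1 := by
            gcongr
            exact exp_le_one_iff.2 (div_nonpos_of_nonpos_of_nonneg (by linarith) hr0.le)
        _ = r ^ (-α) * r := mul_one _
  have hIoi : ∫ r in Ioi 0, g r = M * (K + 1 / (α - 2)) := by
    rw [integral_const_mul, integral_add h1.restrict h2.restrict,
      setIntegral_indicator measurableSet_Ioc, setIntegral_indicator measurableSet_Ioi,
      inter_eq_right.2 Ioc_subset_Ioi_self,
      inter_eq_right.2 (Ioi_subset_Ioi zero_le_one), setIntegral_const,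
      integral_Ioi_rpow_of_lt (by linarith) one_pos, Real.volume_real_Ioc_of_le zero_le_one,
      one_rpow, sub_zero, smul_eq_mul, one_mul]
    have : 1 - α + 1 ≠ 0 := by linarith
    have : α - 2 ≠ 0 := by linarith
    field_simp
    ring
  calc ∫ r in Ioi a, f r ≤ ∫ r in Ioi a, g r :=
        integral_mono_of_nonneg (ae_restrict_of_forall_mem measurableSet_Ioi hf0)
          (hg_int.mono_set (Ioi_subset_Ioi ha)) (ae_restrict_of_forall_mem measurableSet_Ioi hfg)
    _ ≤ ∫ r in Ioi 0, g r :=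
        setIntegral_mono_set hg_int (Eventually.of_forall hg0) (Ioi_subset_Ioi ha).eventuallyLE
    _ = M * (K + 1 / (α - 2)) := hIoi

section Doubling

variable {f : ℝ → ℝ} {X : ℝ}

theorem le_two_pow_mul_of_le_two_mul (hX : 0 ≤ X) (hf0 : ∀ x ≥ X, 0 ≤ f x)
    (hf : ∀ x ≥ X, ∀ y ∈ Icc x (2 * x), f y ≤ 2 * f x) (k : ℕ) :
    ∀ x ≥ X, ∀ y ∈ Icc x (2 ^ k * x), f y ≤ 2 ^ k * f x := by
  induction k with
  | zero =>
    rintro x - y ⟨hxy, hyx⟩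
    rw [pow_zero, one_mul] at hyx ⊢
    rw [le_antisymm hyx hxy]
  | succ k ih =>
    rintro x hx y ⟨hxy, hy⟩
    have hk : (1 : ℝ) ≤ 2 ^ k := one_le_pow₀ one_le_two
    rcases le_or_gt y (2 * x) with hy2 | hy2
    · calc f y ≤ 2 * f x := hf x hx y ⟨hxy, hy2⟩
        _ ≤ 2 ^ (k + 1) * f x := by
          have := hf0 x hx
          rw [pow_succ']; nlinarith
    · calc f y ≤ 2 ^ k * f (2 * x) :=
            ih (2 * x) (by linarith) y ⟨hy2.le, by rw [pow_succ] at hy; linarith⟩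
        _ ≤ 2 ^ k * (2 * f x) := by gcongr; exact hf x hx _ ⟨by linarith, le_rfl⟩
        _ = 2 ^ (k + 1) * f x := by ring

theorem le_two_mul_div_mul_of_le_two_mul (hX : 0 < X) (hf0 : ∀ x ≥ X, 0 ≤ f x)
    (hf : ∀ x ≥ X, ∀ y ∈ Icc x (2 * x), f y ≤ 2 * f x) {x y : ℝ} (hx : X ≤ x) (hxy : x ≤ y) :
    f y ≤ 2 * (y / x) * f x := by
  have hx0 : 0 < x := hX.trans_le hx
  obtain ⟨k, hk, hk'⟩ := exists_nat_pow_near ((one_le_div hx0).2 hxy) one_lt_two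
  calc f y ≤ 2 ^ (k + 1) * f x :=
        le_two_pow_mul_of_le_two_mul hX.le hf0 hf (k + 1) x hx y
          ⟨hxy, ((div_lt_iff₀ hx0).1 hk').le⟩
    _ = 2 * 2 ^ k * f x := by ring
    _ ≤ 2 * (y / x) * f x := by have := hf0 x hx; gcongr

end Doubling

theorem le_two_mul_max_div_mul {l : ℝ → ℝ} {X : ℝ} (hX : 0 < X) (hl_pos : ∀ x ≥ X, 0 < l x)
    (hl : ∀ x ≥ X, ∀ y ∈ Icc x (2 * x), l y ≤ 2 * l x ∧ l x ≤ 2 * l y)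
    {x y : ℝ} (hx : X ≤ x) (hy : X ≤ y) :
    l y ≤ 2 * max (y / x) (x / y) * l x := by
  have hlx := hl_pos x hx
  rcases le_total x y with hxy | hyx
  · calc l y ≤ 2 * (y / x) * l x := le_two_mul_div_mul_of_le_two_mul hX
          (fun x hx => (hl_pos x hx).le) (fun x hx y hy => (hl x hx y hy).1) hx hxy
      _ ≤ 2 * max (y / x) (x / y) * l x := by gcongr; exact le_max_left _ _
  · have hly := hl_pos y hy
    have hx0 : 0 < x := hX.trans_le hx
    have hy0 : 0 < y := hX.trans_le hy
    have h := le_two_mul_div_mul_of_le_two_mul (f := fun x => (l x)⁻¹) hX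
      (fun x hx => (inv_pos.2 (hl_pos x hx)).le) (fun x hx y hy => by
        have hlx := hl_pos x hx
        have hly := hl_pos y (hx.trans hy.1)
        rw [← div_eq_mul_inv, inv_le_comm₀ hly (by positivity), inv_div, div_le_iff₀ two_pos]
        linarith [(hl x hx y hy).2]) hy hyx
    rw [← div_eq_mul_inv, inv_le_comm₀ hlx (by positivity), inv_div] at h
    calc l y ≤ 2 * (x / y) * l x := by rwa [div_le_iff₀ (by positivity), mul_comm] at h
      _ ≤ 2 * max (y / x) (x / y) * l x := by gcongr; exact le_max_right _ _

def IsSlowlyVarying (l : ℝ → ℝ) : Prop :=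
  ∀ t > 0, Tendsto (fun x => l (t * x) / l x) atTop (𝓝 1)

theorem AEMeasurable.comp_mul_right_restrict {β : Type*} [MeasurableSpace β] {f : ℝ → β}
    {s t : Set ℝ} {z : ℝ} (hf : AEMeasurable f (volume.restrict t)) (hz : z ≠ 0)
    (hst : MapsTo (· * z) s t) :
    AEMeasurable (fun u => f (u * z)) (volume.restrict s) := by
  have hqmp : Measure.QuasiMeasurePreserving (· * z) volume volume := by
    simpa only [smul_eq_mul, mul_comm z] using
      Measure.quasiMeasurePreserving_smul (volume : Measure ℝ) hz
  exact hf.comp_quasiMeasurePreserving (hqmp.restrict hst)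

theorem exists_mem_Icc_mul_notMem {A B : Set ℝ} {s : ℝ} (hs : 1 ≤ s)
    (hAB : volume A + volume B < 1) : ∃ w ∈ Icc (1 : ℝ) 2, s * w ∉ A ∧ w ∉ B := by
  by_contra! h
  have hsub : Icc (1 : ℝ) 2 ⊆ (s * ·) ⁻¹' A ∪ B := fun w hw => by
    by_cases hA : s * w ∈ A
    · exact Or.inl hA
    · exact Or.inr (h w hw hA)
  have hpre : volume ((s * ·) ⁻¹' A) ≤ volume A := by
    rw [Real.volume_preimage_mul_left (by positivity)]
    calc ENNReal.ofReal |s⁻¹| * volume A ≤ 1 * volume A := by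
          gcongr
          rw [ENNReal.ofReal_le_one, abs_inv, abs_of_pos (by positivity)]
          exact inv_le_one_of_one_le₀ hs
      _ = volume A := one_mul _
  have := (measure_mono hsub).trans ((measure_union_le _ _).trans (add_le_add_left hpre _))
  rw [Real.volume_Icc] at this
  norm_num at this
  exact absurd (this.trans_lt hAB) (lt_irrefl _)

theorem le_two_mul_of_abs_div_sub_one_lt {a p q : ℝ} (hp : 0 < p) (hq : 0 < q)
    (hap : |a / p - 1| < 1 / 4) (haq : |a / q - 1| < 1 / 4) : q ≤ 2 * p := by
  rw [abs_sub_lt_iff, sub_lt_iff_lt_add, sub_lt_comm, div_lt_iff₀ hp, lt_div_iff₀ hp] at hap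
  rw [abs_sub_lt_iff, sub_lt_iff_lt_add, sub_lt_comm, div_lt_iff₀ hq, lt_div_iff₀ hq] at haq
  linarith [hap.1, haq.2]

namespace IsSlowlyVarying

variable {l : ℝ → ℝ} {b₁ : ℝ}

theorem tendstoInMeasure_ratio (hl : IsSlowlyVarying l)
    (hmeas : AEMeasurable l (volume.restrict (Ioi b₁))) {z : ℕ → ℝ} (hz : Tendsto z atTop atTop)
    (hz0 : ∀ n, 0 < z n) (hzb : ∀ n, b₁ < z n) (a : ℝ) :
    TendstoInMeasure (volume.restrict (Icc 1 a)) (fun n u => l (u * z n) / l (z n)) atTop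
      (fun _ => 1) := by
  refine tendstoInMeasure_of_tendsto_ae (fun n => ?_) ?_
  · refine ((hmeas.comp_mul_right_restrict (hz0 n).ne' fun u hu => ?_).div_const _)
      |>.aestronglyMeasurable
    exact (hzb n).trans_le (le_mul_of_one_le_left (hz0 n).le hu.1)
  · filter_upwards [ae_restrict_mem measurableSet_Icc] with u hu
    exact (hl u (zero_lt_one.trans_le hu.1)).comp hz

theorem eventually_le_two_mul (hl : IsSlowlyVarying l) (hl_pos : ∀ x > 0, 0 < l x)
    (hmeas : AEMeasurable l (volume.restrict (Ioi b₁))) :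
    ∀ᶠ x in atTop, ∀ y ∈ Icc x (2 * x), l y ≤ 2 * l x ∧ l x ≤ 2 * l y := by
  by_contra h
  obtain ⟨x, hx_top, hx⟩ := frequently_iff_seq_forall.1
    ((not_eventually.1 h).and_eventually (eventually_gt_atTop (max b₁ 0)))
  choose hbad hxb using hx
  simp only [not_forall] at hbad
  choose y hy hbad using hbad
  -- With `y n = s * x n`, convergence in measure of `u ↦ l (u * x n) / l (x n)` on `[1, 4]` and of
  -- `w ↦ l (w * y n) / l (y n)` on `[1, 2]` yields a `w` making both ratios close to `1` at the
  -- common point `s * w * x n = w * y n`.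
  have hx0 : ∀ n, 0 < x n := fun n => (le_max_right _ _).trans_lt (hxb n)
  have hxb₁ : ∀ n, b₁ < x n := fun n => (le_max_left _ _).trans_lt (hxb n)
  have hy_top : Tendsto y atTop atTop := tendsto_atTop_mono (fun n => (hy n).1) hx_top
  have hsmall : ∀ z : ℕ → ℝ, Tendsto z atTop atTop → (∀ n, x n ≤ z n) → ∀ a : ℝ,
      ∀ᶠ n in atTop, volume.restrict (Icc 1 a)
        {u | ENNReal.ofReal (1 / 4) ≤ edist (l (u * z n) / l (z n)) 1} < 2⁻¹ :=
    fun z hz hxz a => (hl.tendstoInMeasure_ratio hmeas hz (fun n => (hx0 n).trans_le (hxz n))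
      (fun n => (hxb₁ n).trans_le (hxz n)) a _ (by norm_num)).eventually_lt_const
      (by norm_num)
  obtain ⟨n, hnx, hny⟩ :=
    ((hsmall x hx_top (fun _ => le_rfl) 4).and (hsmall y hy_top (fun n => (hy n).1) 2)).exists
  rw [Measure.restrict_apply' measurableSet_Icc] at hnx hny
  set s := y n / x n with hs
  have hs1 : 1 ≤ s := (one_le_div (hx0 n)).2 (hy n).1
  have hs2 : s ≤ 2 := (div_le_iff₀ (hx0 n)).2 (hy n).2
  have hys : y n = s * x n := by rw [hs, div_mul_cancel₀ _ (hx0 n).ne']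
  obtain ⟨w, hw, hwx, hwy⟩ := exists_mem_Icc_mul_notMem hs1
    (lt_of_lt_of_eq (ENNReal.add_lt_add hnx hny) ENNReal.inv_two_add_inv_two)
  have hsw : s * w ∈ Icc (1 : ℝ) 4 := ⟨one_le_mul_of_one_le_of_one_le hs1 hw.1, by nlinarith [hw.2]⟩
  have hx' : |l (s * w * x n) / l (x n) - 1| < 1 / 4 := by
    rw [← Real.dist_eq, ← edist_lt_ofReal]; exact not_le.1 fun h => hwx ⟨h, hsw⟩
  have hy' : |l (s * w * x n) / l (y n) - 1| < 1 / 4 := by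
    rw [show s * w * x n = w * y n by rw [hys]; ring, ← Real.dist_eq, ← edist_lt_ofReal]
    exact not_le.1 fun h => hwy ⟨h, hw⟩
  have hlx := hl_pos _ (hx0 n)
  have hly := hl_pos _ ((hx0 n).trans_le (hy n).1)
  exact hbad n ⟨le_two_mul_of_abs_div_sub_one_lt hlx hly hx' hy',
    le_two_mul_of_abs_div_sub_one_lt hly hlx hy' hx'⟩

theorem exists_potter_bound (hl : IsSlowlyVarying l) (hl_pos : ∀ x > 0, 0 < l x)
    (hmeas : AEMeasurable l (volume.restrict (Ioi b₁))) :
    ∃ X, ∀ x ≥ X, ∀ y ≥ X, l y ≤ 2 * max (y / x) (x / y) * l x := by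
  obtain ⟨X, hX⟩ := eventually_atTop.1 (hl.eventually_le_two_mul hl_pos hmeas)
  have hX1 : 0 < max X 1 := by positivity
  exact ⟨max X 1, fun x hx y hy => le_two_mul_max_div_mul hX1
    (fun x hx => hl_pos x (hX1.trans_le hx)) (fun x hx => hX x (le_of_max_le_left hx)) hx hy⟩

end IsSlowlyVarying

theorem integral_rpow_mul_exp_le_of_potter {l : ℝ → ℝ} {α c X : ℝ} (hα : 2 < α) (hc : 0 < c)
    (hl_pos : ∀ x > 0, 0 < l x)
    (hpotter : ∀ x ≥ X, ∀ y ≥ X, l y ≤ 2 * max (y / x) (x / y) * l x) :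
    ∃ C > 0, ∀ b ≥ max X 1, ∫ t in Ioi b, t ^ (-α) * l t * exp (-c * b ^ 2 / t) ≤
      C * b ^ 2 * ((b ^ 2) ^ (-α) * l (b ^ 2)) := by
  have hα2 : 0 < α - 2 := by linarith
  refine ⟨2 * (⌈α + 1⌉₊ ! / c ^ ⌈α + 1⌉₊ + 1 / (α - 2)), by positivity, fun b hb => ?_⟩
  obtain ⟨hbX, hb1⟩ := max_le_iff.1 hb
  have hb0 : 0 < b := one_pos.trans_le hb1
  have hB0 : 0 < b ^ 2 := by positivity
  have hlB := hl_pos _ hB0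
  set f : ℝ → ℝ := fun t => t ^ (-α) * l t * exp (-c * b ^ 2 / t)
  have hsubst : ∫ t in Ioi b, f t = b ^ 2 * ∫ r in Ioi b⁻¹, f (b ^ 2 * r) := by
    rw [← smul_eq_mul, integral_comp_mul_left_Ioi' f _ hB0, sq, mul_assoc,
      mul_inv_cancel₀ hb0.ne', mul_one]
  have hf0 : ∀ r ∈ Ioi b⁻¹, 0 ≤ f (b ^ 2 * r) := fun r hr => by
    have hr0 : 0 < r := (inv_pos.2 hb0).trans hr
    have := hl_pos _ (mul_pos hB0 hr0)
    positivity
  have hf : ∀ r ∈ Ioi b⁻¹, f (b ^ 2 * r) ≤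
      2 * ((b ^ 2) ^ (-α) * l (b ^ 2)) * (r ^ (-α) * max r r⁻¹ * exp (-c / r)) := by
    intro r hr
    have hr0 : 0 < r := (inv_pos.2 hb0).trans hr
    have hBr : b ≤ b ^ 2 * r := by
      have := (inv_lt_iff_one_lt_mul₀' hb0).1 hr
      nlinarith
    have hpot := hpotter _ (hbX.trans (show b ≤ b ^ 2 by nlinarith)) _ (hbX.trans hBr)
    rw [mul_div_cancel_left₀ _ hB0.ne', div_mul_cancel_left₀ hB0.ne'] at hpot
    simp only [f]
    rw [mul_rpow hB0.le hr0.le, show -c * b ^ 2 / (b ^ 2 * r) = -c / r by field_simp]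
    calc (b ^ 2) ^ (-α) * r ^ (-α) * l (b ^ 2 * r) * exp (-c / r)
        ≤ (b ^ 2) ^ (-α) * r ^ (-α) * (2 * max r r⁻¹ * l (b ^ 2)) * exp (-c / r) := by gcongr
      _ = _ := by ring
  calc ∫ t in Ioi b, f t = b ^ 2 * ∫ r in Ioi b⁻¹, f (b ^ 2 * r) := hsubst
    _ ≤ b ^ 2 * (2 * ((b ^ 2) ^ (-α) * l (b ^ 2)) *
          (⌈α + 1⌉₊ ! / c ^ ⌈α + 1⌉₊ + 1 / (α - 2))) := by
        gcongr
        exact setIntegral_le_of_le_mul_kernel hα hc (inv_nonneg.2 hb0.le) (by positivity) hf0 hf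
    _ = _ := by ring

theorem aemeasurable_of_aemeasurable_mul_of_continuousOn {α : Type*} [TopologicalSpace α]
    [MeasurableSpace α] [OpensMeasurableSpace α] {μ : Measure α} {f g : α → ℝ} {s : Set α}
    (hs : MeasurableSet s) (hg : ContinuousOn g s) (hg0 : ∀ x ∈ s, g x ≠ 0)
    (h : AEMeasurable (fun x => g x * f x) (μ.restrict s)) :
    AEMeasurable f (μ.restrict s) := by
  refine (((hg.inv₀ hg0).aemeasurable hs).mul h).congr ?_
  filter_upwards [ae_restrict_mem hs] with x hx
  simp [inv_mul_cancel_left₀ (hg0 x hx)]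

theorem integral_rpow_mul_exp_eq_zero_of_not_aemeasurable {l : ℝ → ℝ} {α c b : ℝ} (hb : 0 < b)
    (hl : ¬AEMeasurable l (volume.restrict (Ioi b))) :
    ∫ t in Ioi b, t ^ (-α) * l t * exp (-c * b ^ 2 / t) = 0 := by
  refine integral_non_aestronglyMeasurable fun h => hl ?_
  refine aemeasurable_of_aemeasurable_mul_of_continuousOn measurableSet_Ioi
    (g := fun t => t ^ (-α) * exp (-c * b ^ 2 / t)) ?_ (fun t ht => ?_)
    (h.aemeasurable.congr (Eventually.of_forall fun t => by ring))
  · exact (continuousOn_id.rpow_const fun t ht => Or.inl (hb.trans ht).ne').mul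
      (continuous_exp.comp_continuousOn
        (continuousOn_const.div continuousOn_id fun t ht => (hb.trans ht).ne'))
  · exact (mul_pos (rpow_pos_of_pos (hb.trans ht) _) (exp_pos _)).ne'

/-- If `v(x) = x^{−α} l(x)` with `α > 2` and `l` slowly varying at infinity, then
for every `c > 0`, `∫_b^∞ v(t)·exp(−c b²/t) dt = O(b²·v(b²))` as `b → ∞`. -/
theorem stmt3 (α : ℝ) (hα : 2 < α) (l : ℝ → ℝ) (hl_pos : ∀ x > 0, 0 < l x)
    (hl_slow : ∀ t > 0, Tendsto (fun x => l (t * x) / l x) atTop (nhds 1))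
    (v : ℝ → ℝ) (hv : ∀ x, v x = x ^ (-α) * l x) (c : ℝ) (hc : 0 < c) :
    ∃ C > 0, ∃ b₀ > 0, ∀ b > b₀,
      ∫ t in Set.Ioi b, v t * Real.exp (-c * b ^ 2 / t) ≤ C * b ^ 2 * v (b ^ 2) := by
  simp only [hv]
  by_cases hmeas : ∃ b₁, AEMeasurable l (volume.restrict (Ioi b₁))
  · obtain ⟨b₁, hmeas⟩ := hmeas
    obtain ⟨X, hpotter⟩ := IsSlowlyVarying.exists_potter_bound hl_slow hl_pos hmeas
    obtain ⟨C, hC, hbound⟩ := integral_rpow_mul_exp_le_of_potter hα hc hl_pos hpotter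
    exact ⟨C, hC, max X 1, by positivity, fun b hb => hbound b hb.le⟩
  · -- Bochner integrals of non-measurable functions are `0` by convention.
    refine ⟨1, one_pos, 1, one_pos, fun b hb => ?_⟩
    rw [integral_rpow_mul_exp_eq_zero_of_not_aemeasurable (one_pos.trans hb) fun h => hmeas ⟨b, h⟩]
    have := hl_pos (b ^ 2) (by positivity)
    positivity
end

section
/- Let V, T be independent nonnegative random variables with P(V > x) = x^{−α}·L(x) for α > 1 and L slowly varying, and P(T > x) = o(P(V > x)). Then P(V − T > x) ∼ P(V > x) as x → ∞. -/
open Filter MeasureTheory ProbabilityTheory Real Set Topology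

/-! On `{V > (1 + δ) x} \ {T > δ x}` we have `V - T > x`, so
`P(V > (1 + δ) x) - P(T > δ x) ≤ P(V - T > x) ≤ P(V > x)`, the upper bound because `T ≥ 0`.
Divided by `P(V > x)`, regular variation turns the left side into `(1 + δ) ^ (-α) - o(1)`,
and letting `δ → 0` squeezes the ratio to `1`. -/

theorem eventually_ne_zero_of_tendsto_div_one {L : ℝ → ℝ} {t : ℝ}
    (hL : Tendsto (fun x => L (t * x) / L x) atTop (𝓝 1)) : ∀ᶠ x in atTop, L x ≠ 0 :=
  (hL.eventually_ne one_ne_zero).mono fun x hx hLx => hx (by rw [hLx, div_zero])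

section RegularVariation

variable {d L : ℝ → ℝ} {ρ : ℝ}

theorem tendsto_div_rpow_of_eq_rpow_mul (hd : ∀ x > 0, d x = x ^ ρ * L x) {t : ℝ} (ht : 0 < t)
    (hL : Tendsto (fun x => L (t * x) / L x) atTop (𝓝 1)) :
    Tendsto (fun x => d (t * x) / d x) atTop (𝓝 (t ^ ρ)) := by
  have hratio : (fun x => t ^ ρ * (L (t * x) / L x)) =ᶠ[atTop] fun x => d (t * x) / d x := by
    filter_upwards [eventually_gt_atTop 0, eventually_ne_zero_of_tendsto_div_one hL]
      with x hx hLx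
    have hxρ : x ^ ρ ≠ 0 := (rpow_pos_of_pos hx ρ).ne'
    rw [hd _ (mul_pos ht hx), hd x hx, mul_rpow ht.le hx.le]
    field_simp
  simpa using (hL.const_mul (t ^ ρ)).congr' hratio

theorem eventually_pos_of_eq_rpow_mul (hd_nonneg : ∀ x, 0 ≤ d x)
    (hd : ∀ x > 0, d x = x ^ ρ * L x)
    (hL : Tendsto (fun x => L (2 * x) / L x) atTop (𝓝 1)) : ∀ᶠ x in atTop, 0 < d x := by
  filter_upwards [eventually_gt_atTop 0, eventually_ne_zero_of_tendsto_div_one hL]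
    with x hx hLx
  refine (hd_nonneg x).lt_of_ne' ?_
  rw [hd x hx]
  exact mul_ne_zero (rpow_pos_of_pos hx ρ).ne' hLx

variable (hd_reg : ∀ t > 0, Tendsto (fun x => d (t * x) / d x) atTop (𝓝 (t ^ ρ)))
include hd_reg

theorem tendsto_comp_mul_div_of_tendsto_div_zero {e : ℝ → ℝ} (hd_pos : ∀ᶠ x in atTop, 0 < d x)
    (he : Tendsto (fun x => e x / d x) atTop (𝓝 0)) {δ : ℝ} (hδ : 0 < δ) :
    Tendsto (fun x => e (δ * x) / d x) atTop (𝓝 0) := by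
  have hδx : Tendsto (fun x : ℝ => δ * x) atTop atTop := tendsto_id.const_mul_atTop hδ
  have hprod := (he.comp hδx).mul (hd_reg δ hδ)
  rw [zero_mul] at hprod
  refine hprod.congr' ?_
  filter_upwards [hδx.eventually hd_pos] with x hx
  simp only [Function.comp_apply]
  field_simp

theorem tendsto_div_one_of_le_of_sub_le {g e : ℝ → ℝ} (hd_pos : ∀ᶠ x in atTop, 0 < d x)
    (he : Tendsto (fun x => e x / d x) atTop (𝓝 0))
    (hupper : ∀ᶠ x in atTop, g x ≤ d x)
    (hlower : ∀ δ > 0, ∀ x, d ((1 + δ) * x) - e (δ * x) ≤ g x) :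
    Tendsto (fun x => g x / d x) atTop (𝓝 1) := by
  refine tendsto_order.2 ⟨fun a ha => ?_, fun b hb => ?_⟩
  · have hcont : Tendsto (fun δ : ℝ => (1 + δ) ^ ρ) (𝓝[>] 0) (𝓝 1) := by
      refine tendsto_nhdsWithin_of_tendsto_nhds ?_
      have hsum : Tendsto (fun δ : ℝ => 1 + δ) (𝓝 0) (𝓝 1) := by
        simpa using (tendsto_const_nhds (x := (1 : ℝ))).add (tendsto_id (x := 𝓝 0))
      have hrpow := (continuousAt_rpow_const 1 ρ (Or.inl one_ne_zero)).tendsto.comp hsum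
      rwa [one_rpow] at hrpow
    obtain ⟨δ, hδa, hδ⟩ :=
      ((hcont.eventually (lt_mem_nhds ha)).and self_mem_nhdsWithin).exists
    have hlim : Tendsto (fun x => d ((1 + δ) * x) / d x - e (δ * x) / d x) atTop
        (𝓝 ((1 + δ) ^ ρ - 0)) :=
      (hd_reg _ (by linarith)).sub
        (tendsto_comp_mul_div_of_tendsto_div_zero hd_reg hd_pos he hδ)
    rw [sub_zero] at hlim
    filter_upwards [hlim.eventually (lt_mem_nhds hδa), hd_pos] with x hx hdx
    calc a < d ((1 + δ) * x) / d x - e (δ * x) / d x := hx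
      _ = (d ((1 + δ) * x) - e (δ * x)) / d x := (sub_div _ _ _).symm
      _ ≤ g x / d x := by gcongr; exact hlower δ hδ x
  · filter_upwards [hupper, hd_pos] with x hx hdx
    exact ((div_le_one hdx).2 hx).trans_lt hb

end RegularVariation

section Measure

variable {Ω : Type*} [MeasurableSpace Ω] (P : Measure Ω) (V T : Ω → ℝ)

theorem measure_sub_gt_le (hT : ∀ ω, 0 ≤ T ω) (x : ℝ) :
    P {ω | V ω - T ω > x} ≤ P {ω | V ω > x} :=
  measure_mono fun ω (h : x < V ω - T ω) => show x < V ω by linarith [hT ω]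

theorem measure_gt_mul_le_measure_sub_gt_add (δ x : ℝ) :
    P {ω | V ω > (1 + δ) * x} ≤ P {ω | V ω - T ω > x} + P {ω | T ω > δ * x} := by
  refine (measure_mono fun ω (h : (1 + δ) * x < V ω) => ?_).trans (measure_union_le _ _)
  by_cases hTω : δ * x < T ω
  · exact Or.inr hTω
  · exact Or.inl (show x < V ω - T ω by linarith [not_lt.1 hTω])

end Measure

theorem stmt7_general {Ω : Type*} [MeasurableSpace Ω] (P : Measure Ω) [IsProbabilityMeasure P]
    (V T : Ω → ℝ)
    (hTpos : ∀ ω, 0 ≤ T ω)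
    (α : ℝ) (L : ℝ → ℝ)
    (hL_slow : ∀ t > 0, Tendsto (fun x => L (t * x) / L x) atTop (nhds 1))
    (htail : ∀ x > 0, (P {ω | V ω > x}).toReal = x ^ (-α) * L x)
    (hTtail : Tendsto
      (fun x => (P {ω | T ω > x}).toReal / (P {ω | V ω > x}).toReal)
      atTop (nhds 0)) :
    Tendsto
      (fun x => (P {ω | V ω - T ω > x}).toReal / (P {ω | V ω > x}).toReal)
      atTop (nhds 1) := by
  have hd_pos := eventually_pos_of_eq_rpow_mul (fun _ => ENNReal.toReal_nonneg) htail
    (hL_slow 2 two_pos)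
  have hd_reg := fun t (ht : 0 < t) => tendsto_div_rpow_of_eq_rpow_mul htail ht (hL_slow t ht)
  refine tendsto_div_one_of_le_of_sub_le hd_reg hd_pos hTtail
    (Eventually.of_forall fun x => ENNReal.toReal_mono (by finiteness)
      (measure_sub_gt_le P V T hTpos x)) fun δ _ x => ?_
  have h := ENNReal.toReal_mono (by finiteness) (measure_gt_mul_le_measure_sub_gt_add P V T δ x)
  rw [ENNReal.toReal_add (by finiteness) (by finiteness)] at h
  linarith

/-- If `V, T` are independent nonnegative random variables, `V` has regularly
varying right tail `P(V > x) = x^{−α} L(x)` with `α > 1` and `L` slowly varying,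
and `P(T > x) = o(P(V > x))`, then `P(V − T > x) ∼ P(V > x)` as `x → ∞`. -/
theorem stmt7 {Ω : Type*} [MeasurableSpace Ω] (P : Measure Ω) [IsProbabilityMeasure P]
    (V T : Ω → ℝ) (hV : Measurable V) (hT : Measurable T)
    (hVpos : ∀ ω, 0 ≤ V ω) (hTpos : ∀ ω, 0 ≤ T ω)
    (hindep : IndepFun V T P)
    (α : ℝ) (hα : 1 < α) (L : ℝ → ℝ)
    (hL_slow : ∀ t > 0, Tendsto (fun x => L (t * x) / L x) atTop (nhds 1))
    (htail : ∀ x > 0, (P {ω | V ω > x}).toReal = x ^ (-α) * L x)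
    (hTtail : Tendsto
      (fun x => (P {ω | T ω > x}).toReal / (P {ω | V ω > x}).toReal)
      atTop (nhds 0)) :
    Tendsto
      (fun x => (P {ω | V ω - T ω > x}).toReal / (P {ω | V ω > x}).toReal)
      atTop (nhds 1) :=
  stmt7_general P V T hTpos α L hL_slow htail hTtail
end

section
/- Consider the Kiefer–Wolfowitz recursion: W_{n+1}^{(1)} = min((W_n^{(1)} + V_n − T_{n+1})^+, (W_n^{(2)} − T_{n+1})^+) and W_{n+1}^{(2)} = max((W_n^{(1)} + V_n − T_{n+1})^+, (W_n^{(2)} − T_{n+1})^+), where (V_n, T_{n+1}) are i.i.d. with V, T ≥ 0 independent, E[V] = E[T] = 1, and E[T·1(T > C)] → 0 as C → ∞. Then there exist positive constants C and ε such that for every initial state (w_1, w_2) with 0 ≤ w_1 ≤ w_2 and w_2 ≥ C, E[W_1^{(1)} + W_1^{(2)} | W_0 = (w_1,w_2)] < (w_1 + w_2) − ε. -/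
open Filter MeasureTheory ProbabilityTheory Real

/-! Since `min + max` is the sum and `(a - T)⁺ = a - min T a`, the expected total workload
after one step is `w₁ + w₂ + E V - E min(T, w₁ + V) - E min(T, w₂)`. The first of these minima
dominates `min(T, V)`, whose mean `δ` is positive because `V` and `T` are independent and each
positive with positive probability. The second dominates `min(T, C)` once `w₂ ≥ C`, and
`E min(T, C) → E T = E V` as `C → ∞`; so for large `C` the drift is below `-δ / 2`. -/

lemma max_sub_zero_eq_sub_min (a t : ℝ) : max (a - t) 0 = a - min t a := by
  rw [← max_sub_sub_left, sub_self]

lemma support_min_of_nonneg {α : Type*} {f g : α → ℝ} (hf : 0 ≤ f) (hg : 0 ≤ g) :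
    Function.support (fun x => min (f x) (g x)) = Function.support f ∩ Function.support g := by
  ext x
  simp only [Function.mem_support, Set.mem_inter_iff, ne_eq]
  rcases le_total (f x) (g x) with h | h
  · rw [min_eq_left h]
    exact ⟨fun hf0 => ⟨hf0, fun hg0 => hf0 (le_antisymm (hg0 ▸ h) (hf x))⟩, And.left⟩
  · rw [min_eq_right h]
    exact ⟨fun hg0 => ⟨fun hf0 => hg0 (le_antisymm (hf0 ▸ h) (hg x)), hg0⟩, And.right⟩

section

variable {Ω : Type*} [MeasurableSpace Ω] {μ : Measure Ω}

lemma integral_min_pos_of_indepFun {X Y : Ω → ℝ} (hXY : IndepFun X Y μ) (hX : 0 ≤ X) (hY : 0 ≤ Y)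
    (hXi : Integrable X μ) (hYi : Integrable Y μ) (hX0 : 0 < ∫ ω, X ω ∂μ)
    (hY0 : 0 < ∫ ω, Y ω ∂μ) : 0 < ∫ ω, min (X ω) (Y ω) ∂μ := by
  rw [integral_pos_iff_support_of_nonneg hX hXi] at hX0
  rw [integral_pos_iff_support_of_nonneg hY hYi] at hY0
  rw [integral_pos_iff_support_of_nonneg (fun ω => le_min (hX ω) (hY ω)) (hXi.inf hYi),
    support_min_of_nonneg hX hY, Function.support_eq_preimage, Function.support_eq_preimage,
    hXY.measure_inter_preimage_eq_mul _ _ (measurableSet_singleton 0).compl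
      (measurableSet_singleton 0).compl]
  exact ENNReal.mul_pos hX0.ne' hY0.ne'

lemma tendsto_integral_min_atTop [IsFiniteMeasure μ] {f : Ω → ℝ} (hf : Integrable f μ) :
    Tendsto (fun c : ℝ => ∫ ω, min (f ω) c ∂μ) atTop (nhds (∫ ω, f ω ∂μ)) := by
  refine tendsto_integral_filter_of_dominated_convergence (fun ω => |f ω|)
    (Eventually.of_forall fun c => (hf.inf (integrable_const c)).aestronglyMeasurable) ?_ hf.abs
    (ae_of_all _ fun ω => tendsto_const_nhds.congr'
      ((eventually_ge_atTop (f ω)).mono fun c hc => (min_eq_left hc).symm))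
  filter_upwards [eventually_ge_atTop 0] with c hc
  refine ae_of_all _ fun ω => abs_le.2 ⟨?_, (min_le_left _ _).trans (le_abs_self _)⟩
  exact le_min (neg_abs_le _) ((neg_nonpos.2 (abs_nonneg _)).trans hc)

lemma integral_min_add_max_posPart {V T : Ω → ℝ} [IsProbabilityMeasure μ]
    (hV : Integrable V μ) (hT : Integrable T μ) (w₁ w₂ : ℝ) :
    ∫ ω, (min (max (w₁ + V ω - T ω) 0) (max (w₂ - T ω) 0) +
        max (max (w₁ + V ω - T ω) 0) (max (w₂ - T ω) 0)) ∂μ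
      = w₁ + w₂ + ∫ ω, V ω ∂μ - ∫ ω, min (T ω) (w₁ + V ω) ∂μ - ∫ ω, min (T ω) w₂ ∂μ := by
  have hV₁ : Integrable (fun ω => w₁ + V ω) μ := (integrable_const w₁).add hV
  have hmin₁ : Integrable (fun ω => min (T ω) (w₁ + V ω)) μ := hT.inf hV₁
  have hmin₂ : Integrable (fun ω => min (T ω) w₂) μ := hT.inf (integrable_const w₂)
  have h₁ : Integrable (fun ω => w₁ + V ω - min (T ω) (w₁ + V ω)) μ := hV₁.sub hmin₁
  have h₂ : Integrable (fun ω => w₂ - min (T ω) w₂) μ := (integrable_const w₂).sub hmin₂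
  simp only [min_add_max, max_sub_zero_eq_sub_min]
  rw [integral_add h₁ h₂, integral_sub hV₁ hmin₁, integral_sub (integrable_const w₂) hmin₂,
    integral_add (integrable_const w₁) hV]
  simp only [integral_const, probReal_univ, one_smul]
  ring

end

theorem stmt8_general {Ω : Type*} [MeasurableSpace Ω] (P : Measure Ω) [IsProbabilityMeasure P]
    (V T : Ω → ℝ) (hVpos : ∀ ω, 0 ≤ V ω) (hTpos : ∀ ω, 0 ≤ T ω)
    (hindep : IndepFun V T P)
    (hVint : Integrable V P) (hTint : Integrable T P)
    (hEV : ∫ ω, V ω ∂P = 1) (hET : ∫ ω, T ω ∂P = 1) :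
    ∃ C > 0, ∃ ε > 0, ∀ w₁ w₂ : ℝ, 0 ≤ w₁ → w₁ ≤ w₂ → C ≤ w₂ →
      (∫ ω, (min (max (w₁ + V ω - T ω) 0) (max (w₂ - T ω) 0) +
             max (max (w₁ + V ω - T ω) 0) (max (w₂ - T ω) 0)) ∂P)
        < (w₁ + w₂) - ε := by
  set δ := ∫ ω, min (T ω) (V ω) ∂P
  have hδ : 0 < δ := integral_min_pos_of_indepFun hindep.symm hTpos hVpos hTint hVint
    (hET ▸ one_pos) (hEV ▸ one_pos)
  obtain ⟨C, hCδ, hC⟩ := (((tendsto_integral_min_atTop hTint).eventually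
    (lt_mem_nhds (show 1 - δ / 2 < ∫ ω, T ω ∂P by linarith))).and (eventually_gt_atTop 0)).exists
  refine ⟨C, hC, δ / 2, half_pos hδ, fun w₁ w₂ hw₁ _ hCw₂ => ?_⟩
  have hδ_le : δ ≤ ∫ ω, min (T ω) (w₁ + V ω) ∂P :=
    integral_mono (hTint.inf hVint) (hTint.inf ((integrable_const w₁).add hVint))
      fun ω => min_le_min_left _ (le_add_of_nonneg_left hw₁)
  have hC_le : ∫ ω, min (T ω) C ∂P ≤ ∫ ω, min (T ω) w₂ ∂P :=
    integral_mono (hTint.inf (integrable_const C)) (hTint.inf (integrable_const w₂))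
      fun ω => min_le_min_left _ hCw₂
  rw [integral_min_add_max_posPart hVint hTint, hEV]
  linarith

/-- One-step drift for the Kiefer–Wolfowitz recursion at `ρ = 1`: if `V, T ≥ 0`
are independent and integrable with `E V = E T = 1` and `P(T > 0) > 0`
(`E[T·1(T>C)] → 0` as `C → ∞`, which holds by integrability), then there exist
`C, ε > 0` such that for every state `(w₁, w₂)` with `0 ≤ w₁ ≤ w₂` and `w₂ ≥ C`,
`E[W₁⁽¹⁾ + W₁⁽²⁾] < (w₁ + w₂) − ε`, where
`W₁⁽¹⁾ = min((w₁+V−T)⁺, (w₂−T)⁺)` and `W₁⁽²⁾ = max((w₁+V−T)⁺, (w₂−T)⁺)`. -/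
theorem stmt8 {Ω : Type*} [MeasurableSpace Ω] (P : Measure Ω) [IsProbabilityMeasure P]
    (V T : Ω → ℝ) (hVm : Measurable V) (hTm : Measurable T)
    (hVpos : ∀ ω, 0 ≤ V ω) (hTpos : ∀ ω, 0 ≤ T ω)
    (hindep : IndepFun V T P)
    (hVint : Integrable V P) (hTint : Integrable T P)
    (hEV : ∫ ω, V ω ∂P = 1) (hET : ∫ ω, T ω ∂P = 1)
    (hT0 : 0 < (P {ω | 0 < T ω}).toReal)
    (hTtrunc : Tendsto (fun C : ℝ => ∫ ω in {ω | T ω > C}, T ω ∂P) atTop (nhds 0)) :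
    ∃ C > 0, ∃ ε > 0, ∀ w₁ w₂ : ℝ, 0 ≤ w₁ → w₁ ≤ w₂ → C ≤ w₂ →
      (∫ ω, (min (max (w₁ + V ω - T ω) 0) (max (w₂ - T ω) 0) +
             max (max (w₁ + V ω - T ω) 0) (max (w₂ - T ω) 0)) ∂P)
        < (w₁ + w₂) - ε :=
  stmt8_general P V T hVpos hTpos hindep hVint hTint hEV hET
end
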